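/- arXiv:1710.09217 — 3 statements merged into one kernel-verified Lean document; each statement's English description precedes it below -/
import Mathlib

section
/- Let B be a symmetric bilinear form of rank r on an n-dimensional vector space V over 𝔽₂, and suppose B is nonalternating, i.e. there exists x ∈ V with B(x,x) ≠ 0. Then V has a basis e₀, …, e_{n−1} in which B is diagonal with exactly r ones: B(e_i, e_j) = 1 if i = j and i < r, and B(e_i, e_j) = 0 otherwise. -/
private lemma zmod2_ne_zero : ∀ c : ZMod 2, c ≠ 0 → c = 1 := by decide

private lemma zmod2_add_self : ∀ c : ZMod 2, c + c = 0 := by decide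

set_option maxHeartbeats 2000000 in
private lemma aux_diag : ∀ (n : ℕ) (V : Type u) [AddCommGroup V] [Module (ZMod 2) V]
    [FiniteDimensional (ZMod 2) V], Module.finrank (ZMod 2) V = n →
    ∀ B : V →ₗ[ZMod 2] V →ₗ[ZMod 2] ZMod 2,
    (∀ x y : V, B x y = B y x) →
    ((∀ x : V, B x x = 0) → B = 0) →
    ∃ e : Module.Basis (Fin n) (ZMod 2) V, ∀ i j : Fin n,
      B (e i) (e j) =
        if i = j ∧ (i : ℕ) < Module.finrank (ZMod 2) (LinearMap.range B) then 1 else 0 := by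
  intro n
  induction n with
  | zero =>
    intro V _ _ _ hn B _ _
    have : Subsingleton V := Module.finrank_zero_iff.mp hn
    exact ⟨Module.Basis.empty V, fun i j => i.elim0⟩
  | succ m ih =>
    intro V _ _ _ hn B hsymm halt
    by_cases hB : B = 0
    · subst hB
      refine ⟨Module.finBasisOfFinrankEq (ZMod 2) V hn, fun i j => ?_⟩
      have h0 : Module.finrank (ZMod 2)
          (LinearMap.range (0 : V →ₗ[ZMod 2] V →ₗ[ZMod 2] ZMod 2)) = 0 := by
        rw [LinearMap.range_zero]
        exact finrank_bot _ _
      simp [h0]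
    · -- get x0 with B x0 x0 = 1
      have hex : ∃ x : V, B x x ≠ 0 := by
        by_contra h
        push_neg at h
        exact hB (halt h)
      obtain ⟨x0, hx0⟩ := hex
      have hx0' : B x0 x0 = 1 := zmod2_ne_zero _ hx0
      -- choose a good x
      have key : ∃ x : V, B x x = 1 ∧
          ((∀ w ∈ LinearMap.ker (B x), ∀ w' ∈ LinearMap.ker (B x), B w w' = 0) ∨
            (∃ w ∈ LinearMap.ker (B x), B w w ≠ 0)) := by
        by_cases hna : ∃ w ∈ LinearMap.ker (B x0), B w w ≠ 0
        · exact ⟨x0, hx0', Or.inr hna⟩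
        push_neg at hna
        by_cases hz : ∀ w ∈ LinearMap.ker (B x0), ∀ w' ∈ LinearMap.ker (B x0), B w w' = 0
        · exact ⟨x0, hx0', Or.inl hz⟩
        push_neg at hz
        obtain ⟨a, ha, b, hb, hab⟩ := hz
        rw [LinearMap.mem_ker] at ha hb
        have ha2 : B a x0 = 0 := by rw [hsymm]; exact ha
        have hb2 : B b x0 = 0 := by rw [hsymm]; exact hb
        have hab' : B a b = 1 := zmod2_ne_zero _ hab
        have haa : B a a = 0 := hna a (by rwa [LinearMap.mem_ker])
        have hbb : B b b = 0 := hna b (by rwa [LinearMap.mem_ker])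
        refine ⟨x0 + a, ?_, Or.inr ⟨b + x0, ?_, ?_⟩⟩
        · simp only [map_add, LinearMap.add_apply, hx0', ha, haa, ha2]
          decide
        · rw [LinearMap.mem_ker]
          simp only [map_add, LinearMap.add_apply, hb, hx0', hab', ha2]
          decide
        · simp only [map_add, LinearMap.add_apply, hbb, hx0', hb2, hb]
          decide
      obtain ⟨x, hxx, hcond⟩ := key
      set W : Submodule (ZMod 2) V := LinearMap.ker (B x) with hWdef
      -- finrank W = m
      have hsurj : Function.Surjective (B x) := fun c => ⟨c • x, by simp [hxx]⟩
      have hrange : LinearMap.range (B x) = ⊤ := LinearMap.range_eq_top.mpr hsurj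
      have hfW : Module.finrank (ZMod 2) W = m := by
        have h1 := LinearMap.finrank_range_add_finrank_ker (B x)
        rw [hrange, finrank_top, Module.finrank_self, hn, ← hWdef] at h1
        omega
      -- restriction
      set B' : W →ₗ[ZMod 2] W →ₗ[ZMod 2] ZMod 2 := B.compl₁₂ W.subtype W.subtype with hB'def
      have hB'app : ∀ w w' : W, B' w w' = B (w : V) (w' : V) := fun w w' => rfl
      have hWmem : ∀ w : W, B x (w : V) = 0 := fun w => w.2
      have hWx : ∀ w : W, B (w : V) x = 0 := fun w => by rw [hsymm]; exact hWmem w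
      -- kernels
      have hkerle : LinearMap.ker B ≤ W := by
        intro y hy
        rw [LinearMap.mem_ker] at hy
        rw [hWdef, LinearMap.mem_ker, hsymm, hy]
        rfl
      have hker : LinearMap.ker B' = (LinearMap.ker B).comap W.subtype := by
        ext w
        simp only [LinearMap.mem_ker, Submodule.mem_comap, Submodule.coe_subtype]
        constructor
        · intro h
          ext y
          have hy : y - (B x y) • x ∈ W := by
            rw [hWdef, LinearMap.mem_ker]
            simp [hxx]
          have h2 : B' w ⟨y - (B x y) • x, hy⟩ = 0 := by rw [h]; rfl
          rw [hB'app] at h2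
          simp only [map_sub, map_smul, hWx w, smul_zero, sub_zero] at h2
          simpa using h2
        · intro h
          ext w'
          have h2 : B (w : V) (w' : V) = 0 := by rw [h]; rfl
          rw [LinearMap.zero_apply, hB'app]
          exact h2
      have hfker : Module.finrank (ZMod 2) (LinearMap.ker B') =
          Module.finrank (ZMod 2) (LinearMap.ker B) := by
        rw [hker]
        exact (Submodule.comapSubtypeEquivOfLe hkerle).finrank_eq
      -- rank arithmetic
      set r := Module.finrank (ZMod 2) (LinearMap.range B) with hrdef
      have hrn : r + Module.finrank (ZMod 2) (LinearMap.ker B) = m + 1 := by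
        rw [hrdef, ← hn]
        exact LinearMap.finrank_range_add_finrank_ker B
      have hkerlem : Module.finrank (ZMod 2) (LinearMap.ker B) ≤ m := by
        have := Submodule.finrank_mono hkerle
        omega
      have hr1 : 1 ≤ r := by omega
      have hr' : Module.finrank (ZMod 2) (LinearMap.range B') = r - 1 := by
        have h1 := LinearMap.finrank_range_add_finrank_ker B'
        rw [hfker, hfW] at h1
        omega
      -- IH hypotheses for B'
      have hsymm' : ∀ w w' : W, B' w w' = B' w' w := by
        intro w w'
        rw [hB'app, hB'app, hsymm]
      have halt' : (∀ w : W, B' w w = 0) → B' = 0 := by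
        intro h
        rcases hcond with hzero | ⟨w, hw, hww⟩
        · ext w w'
          rw [hB'app, LinearMap.zero_apply, LinearMap.zero_apply]
          exact hzero _ w.2 _ w'.2
        · exact absurd (h ⟨w, hw⟩) (by rwa [hB'app])
      obtain ⟨f, hf⟩ := ih W hfW B' hsymm' halt'
      -- extend to basis of V
      have hli : ∀ (c : ZMod 2), ∀ w ∈ W, c • x + w = 0 → c = 0 := by
        intro c w hw hcw
        have hw' : B x w = 0 := hw
        have := congrArg (fun y => B x y) hcw
        simpa [hxx, hw'] using this
      have hsp : ∀ z : V, ∃ c : ZMod 2, z + c • x ∈ W := by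
        intro z
        refine ⟨B x z, ?_⟩
        rw [hWdef, LinearMap.mem_ker]
        simp [hxx, zmod2_add_self]
      refine ⟨Module.Basis.mkFinCons x f hli hsp, fun i j => ?_⟩
      rw [show ((Module.Basis.mkFinCons x f hli hsp : Module.Basis (Fin (m+1)) (ZMod 2) V) : Fin (m+1) → V)
          = Fin.cons x (W.subtype ∘ f) from Module.Basis.coe_mkFinCons x f hli hsp]
      refine Fin.cases ?_ (fun i => ?_) i <;> [skip; refine Fin.cases ?_ (fun j => ?_) j]
      · refine Fin.cases ?_ (fun j => ?_) j
        · have hpos : 0 < r := hr1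
          simp [Fin.cons_zero, hxx, hpos]
        · have hz : B x ((f j : V)) = 0 := hWmem (f j)
          simp [Fin.cons_zero, Fin.cons_succ, hz, Ne.symm (Fin.succ_ne_zero j)]
      · simp [Fin.cons_succ, Fin.cons_zero, hWx (f i), Fin.succ_ne_zero i]
      · have hfe := hf i j
        rw [hB'app] at hfe
        simp only [Function.comp_apply, Submodule.coe_subtype, Fin.cons_succ]
        rw [hfe, hr']
        by_cases hij : i = j
        · subst hij
          by_cases hlt : (i : ℕ) < r - 1
          · rw [if_pos ⟨rfl, hlt⟩,
              if_pos ⟨rfl, by simp only [Fin.val_succ]; omega⟩]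
          · rw [if_neg (by tauto), if_neg (by
              rintro ⟨-, h2⟩
              simp only [Fin.val_succ] at h2
              omega)]
        · rw [if_neg (by tauto), if_neg (by
            rintro ⟨h1, -⟩
            exact hij (Fin.succ_injective _ h1))]

/-- A symmetric nonalternating bilinear form of rank `r` on an `n`-dimensional
`𝔽₂`-vector space is diagonalizable with exactly `r` ones on the diagonal. -/
theorem symm_nonalternating_diagonalizable
    (V : Type*) [AddCommGroup V] [Module (ZMod 2) V] [FiniteDimensional (ZMod 2) V]
    (n r : ℕ) (hn : Module.finrank (ZMod 2) V = n)
    (B : V →ₗ[ZMod 2] V →ₗ[ZMod 2] ZMod 2)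
    (hr : Module.finrank (ZMod 2) (LinearMap.range B) = r)
    (hsymm : ∀ x y : V, B x y = B y x)
    (hna : ∃ x : V, B x x ≠ 0) :
    ∃ e : Module.Basis (Fin n) (ZMod 2) V, ∀ i j : Fin n,
      B (e i) (e j) = if i = j ∧ (i : ℕ) < r then 1 else 0 := by
  obtain ⟨x, hx⟩ := hna
  have halt : (∀ y : V, B y y = 0) → B = 0 := fun h => absurd (h x) hx
  obtain ⟨e, he⟩ := aux_diag n V hn B hsymm halt
  exact ⟨e, fun i j => by rw [he i j, hr]⟩
end

section
/- Let S be a finite set of odd prime numbers, and for p ∈ S set p* := (−1)^((p−1)/2)·p. Then the Legendre symbol pairing is symmetric on S, i.e. (p*/q) = (q*/p) for all distinct p, q ∈ S, if and only if at most one prime p ∈ S satisfies p ≡ 3 (mod 4). -/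
lemma legendre_star_eq (p q : ℕ) [Fact p.Prime] [Fact q.Prime]
    (hp : p % 2 = 1) (hq : q % 2 = 1) :
    legendreSym q ((-1) ^ ((p - 1) / 2) * (p : ℤ)) = legendreSym p q := by
  have hp2 : p ≠ 2 := by omega
  have hq2 : q ≠ 2 := by omega
  have he : (p - 1) / 2 = p / 2 := by omega
  rw [he, legendreSym.mul]
  have h1 : legendreSym q ((-1 : ℤ) ^ (p / 2)) = (legendreSym q (-1)) ^ (p / 2) :=
    map_pow (legendreSym.hom q) _ _
  rw [h1, legendreSym.at_neg_one hq2, ZMod.χ₄_eq_neg_one_pow hq,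
    legendreSym.quadratic_reciprocity' hp2 hq2, ← pow_mul, ← mul_assoc, ← pow_add]
  have : (q / 2) * (p / 2) + p / 2 * (q / 2) = 2 * (p / 2 * (q / 2)) := by ring
  rw [this, pow_mul, neg_one_sq, one_pow, one_mul]

/-- For a finite set `S` of odd primes, the pairing `(p, q) ↦ (p*/q)` given by
Legendre symbols (with `p* = (-1)^((p-1)/2)·p`) is symmetric on distinct
elements of `S` iff at most one `p ∈ S` satisfies `p ≡ 3 [MOD 4]`. -/
theorem legendre_star_pairing_symm_iff
    (S : Finset ℕ) (hS : ∀ p ∈ S, p.Prime ∧ p % 2 = 1) :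
    (∀ p, ∀ hp : p ∈ S, ∀ q, ∀ hq : q ∈ S, p ≠ q →
      @legendreSym q ⟨(hS q hq).1⟩ ((-1) ^ ((p - 1) / 2) * (p : ℤ)) =
        @legendreSym p ⟨(hS p hp).1⟩ ((-1) ^ ((q - 1) / 2) * (q : ℤ))) ↔
    (S.filter fun p => p % 4 = 3).card ≤ 1 := by
  constructor
  · intro h
    by_contra hc
    push_neg at hc
    obtain ⟨p, hpmem, q, hqmem, hpq⟩ := Finset.one_lt_card.mp hc
    simp only [Finset.mem_filter] at hpmem hqmem
    obtain ⟨hpS, hp4⟩ := hpmem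
    obtain ⟨hqS, hq4⟩ := hqmem
    have this1 := h p hpS q hqS hpq
    rw [@legendre_star_eq p q ⟨(hS p hpS).1⟩ ⟨(hS q hqS).1⟩ (hS p hpS).2 (hS q hqS).2,
      @legendre_star_eq q p ⟨(hS q hqS).1⟩ ⟨(hS p hpS).1⟩ (hS q hqS).2 (hS p hpS).2,
      @legendreSym.quadratic_reciprocity_three_mod_four p q ⟨(hS p hpS).1⟩ ⟨(hS q hqS).1⟩
        hp4 hq4] at this1
    have hz : @legendreSym p ⟨(hS p hpS).1⟩ q = 0 := by linarith
    rw [legendreSym.eq_zero_iff] at hz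
    exact @ZMod.prime_ne_zero p q ⟨(hS p hpS).1⟩ ⟨(hS q hqS).1⟩ hpq
      (by exact_mod_cast hz)
  · intro h p hpS q hqS hpq
    have hq2 : q ≠ 2 := by have := (hS q hqS).2; omega
    have hp2 : p ≠ 2 := by have := (hS p hpS).2; omega
    have hcases : p % 4 = 1 ∨ q % 4 = 1 := by
      by_contra hcon
      push_neg at hcon
      have hp4 : p % 4 = 3 := by have := (hS p hpS).2; omega
      have hq4 : q % 4 = 3 := by have := (hS q hqS).2; omega
      have : 1 < (S.filter fun p => p % 4 = 3).card :=
        Finset.one_lt_card.mpr ⟨p, Finset.mem_filter.mpr ⟨hpS, hp4⟩,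
          q, Finset.mem_filter.mpr ⟨hqS, hq4⟩, hpq⟩
      omega
    have qr : @legendreSym p ⟨(hS p hpS).1⟩ q = @legendreSym q ⟨(hS q hqS).1⟩ p := by
      rcases hcases with h1 | h1
      · exact (@legendreSym.quadratic_reciprocity_one_mod_four p q ⟨(hS p hpS).1⟩
          ⟨(hS q hqS).1⟩ h1 hq2).symm
      · exact @legendreSym.quadratic_reciprocity_one_mod_four q p ⟨(hS q hqS).1⟩
          ⟨(hS p hpS).1⟩ h1 hp2
    exact (@legendre_star_eq p q ⟨(hS p hpS).1⟩ ⟨(hS q hqS).1⟩ (hS p hpS).2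
        (hS q hqS).2).trans <| qr.trans
      (@legendre_star_eq q p ⟨(hS q hqS).1⟩ ⟨(hS p hpS).1⟩ (hS q hqS).2 (hS p hpS).2).symm
end

section
/- Let q₁, …, q_m be distinct odd prime numbers such that the number of indices i with q_i ≡ 3 (mod 4) is odd, and set q* := (−1)^((q−1)/2)·q for each odd prime q. Then for every index i, ∏_{j ≠ i} (q_i* / q_j) = (∏_{j ≠ i} q_j* / q_i), where (a/q) denotes the Legendre symbol. (This expresses that, in this case, the sum of the columns of the associated Rédei-type matrix over 𝔽₂ is zero.) -/
open Finset

private lemma legendreSym_prod {p : ℕ} [Fact p.Prime] {ι : Type*} (s : Finset ι) (f : ι → ℤ) :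
    legendreSym p (∏ j ∈ s, f j) = ∏ j ∈ s, legendreSym p (f j) := by
  induction s using Finset.cons_induction with
  | empty => simp [legendreSym.at_one]
  | cons a s ha ih => rw [Finset.prod_cons, Finset.prod_cons, legendreSym.mul, ih]

private lemma legendreSym_neg_one_pow {p : ℕ} [Fact p.Prime] (hp : p % 2 = 1) (k : ℕ) :
    legendreSym p ((-1) ^ k) = (-1) ^ (k * (p / 2)) := by
  rcases Nat.even_or_odd k with hk | hk
  · rw [hk.neg_one_pow, (hk.mul_right _).neg_one_pow, legendreSym.at_one]
  · rw [hk.neg_one_pow, legendreSym.at_neg_one (by omega),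
      ZMod.χ₄_eq_neg_one_pow hp, pow_mul, hk.neg_one_pow]

private lemma legendre_star {p q : ℕ} [Fact p.Prime] [Fact q.Prime]
    (hp : p % 2 = 1) (hq : q % 2 = 1) (hpq : p ≠ q) :
    legendreSym q ((-1) ^ ((p - 1) / 2) * (p : ℤ)) = legendreSym p q := by
  have h2 : (p - 1) / 2 = p / 2 := by omega
  rw [legendreSym.mul, h2, legendreSym_neg_one_pow hq,
    legendreSym.quadratic_reciprocity' (by omega) (by omega), ← mul_assoc,
    ← pow_add, Even.neg_one_pow ⟨p / 2 * (q / 2), by ring⟩, one_mul]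

/-- Let `q₁, …, q_m` be distinct odd primes with an odd number of them
`≡ 3 [MOD 4]`, and `q* = (-1)^((q-1)/2)·q`. Then for each `i`,
`∏_{j ≠ i} (q_i*/q_j) = (∏_{j ≠ i} q_j* / q_i)`: the sum of the columns of the
associated Rédei-type matrix over `𝔽₂` is zero. -/
theorem redei_columns_sum_zero
    (m : ℕ) (q : Fin m → ℕ)
    (hq : ∀ i, (q i).Prime ∧ q i % 2 = 1)
    (hinj : Function.Injective q)
    (hodd : Odd (Finset.univ.filter fun i => q i % 4 = 3).card) :
    ∀ i : Fin m,
      (∏ j ∈ Finset.univ.erase i,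
        @legendreSym (q j) ⟨(hq j).1⟩ ((-1) ^ ((q i - 1) / 2) * (q i : ℤ))) =
      @legendreSym (q i) ⟨(hq i).1⟩
        (∏ j ∈ Finset.univ.erase i, ((-1) ^ ((q j - 1) / 2) * (q j : ℤ))) := by
  intro i
  haveI : Fact (q i).Prime := ⟨(hq i).1⟩
  -- LHS: each factor equals (q j / q i) by the starred form of reciprocity
  have hL : (∏ j ∈ Finset.univ.erase i,
        @legendreSym (q j) ⟨(hq j).1⟩ ((-1) ^ ((q i - 1) / 2) * (q i : ℤ))) =
      ∏ j ∈ Finset.univ.erase i, legendreSym (q i) (q j) := by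
    refine Finset.prod_congr rfl fun j hj => ?_
    haveI : Fact (q j).Prime := ⟨(hq j).1⟩
    exact legendre_star (hq i).2 (hq j).2 fun h => (Finset.mem_erase.mp hj).1 (hinj h).symm
  rw [hL, legendreSym_prod]
  -- RHS: split each factor
  have hR : ∀ j ∈ Finset.univ.erase i,
      legendreSym (q i) ((-1) ^ ((q j - 1) / 2) * (q j : ℤ)) =
        (-1) ^ ((q j - 1) / 2 * (q i / 2)) * legendreSym (q i) (q j) := fun j _ => by
    rw [legendreSym.mul, legendreSym_neg_one_pow (hq i).2]
  rw [Finset.prod_congr rfl hR, Finset.prod_mul_distrib, Finset.prod_pow_eq_pow_sum]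
  -- it remains to show the sign is `1`
  have hsign : Even (∑ j ∈ Finset.univ.erase i, (q j - 1) / 2 * (q i / 2)) := by
    rcases (by have := (hq i).2; omega : q i % 4 = 1 ∨ q i % 4 = 3) with h1 | h3
    · have : ∀ j ∈ Finset.univ.erase i, Even ((q j - 1) / 2 * (q i / 2)) :=
        fun j _ => Even.mul_left ⟨(q i) / 4, by omega⟩ _
      exact Finset.even_sum _ this
    · have heven : Even (∑ j ∈ Finset.univ.erase i, (q j - 1) / 2) := by
        rw [Finset.even_sum_iff_even_card_odd]
        have hfe : (Finset.univ.erase i).filter (fun j => Odd ((q j - 1) / 2)) =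
            (Finset.univ.filter fun j => q j % 4 = 3).erase i := by
          rw [← Finset.filter_erase]
          refine Finset.filter_congr fun j _ => ?_
          have := (hq j).2
          rw [Nat.odd_iff]
          omega
        rw [hfe, Finset.card_erase_of_mem (Finset.mem_filter.mpr ⟨Finset.mem_univ i, h3⟩)]
        obtain ⟨k, hk⟩ := hodd
        exact ⟨k, by omega⟩
      rw [← Finset.sum_mul]
      exact heven.mul_right _
  rw [hsign.neg_one_pow, one_mul]
end
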